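/- Assume each distribution has infinite support, i.e. F_i(t) < 1 for all t > 0 and all i = 1,…,K. Let (P^{(n)})_n be a sequence of vectors in (0,∞)^K with P_k^{(n)} → 0 for every k, and let (λ^{(n)})_n be vectors in (0,∞)^K satisfying, for every k and n, the power constraint ∫_{λ_k^{(n)}}^∞ (1/λ_k^{(n)} − 1/h) · ∏_{i≠k} F_i((λ_i^{(n)}/λ_k^{(n)})·h) · f_k(h) dh = P_k^{(n)}. Then λ_k^{(n)} → ∞ as n → ∞, for every k = 1,…,K. (Lemma 1: the Lagrange multipliers of the sum-rate-optimal MAC power allocation diverge at asymptotically low power.) -/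

import Mathlib

/-!
Let `λ_k` be the smallest of the multipliers `λ_1, …, λ_K` and suppose `λ_k ≤ T`.
For `h > 2T` the factor `1/λ_k - 1/h` is at least `1/(2T)`, and since `λ_i/λ_k ≥ 1`
every `F_i` in the integrand is evaluated beyond `2T`. Hence
`P_k ≥ (1/(2T)) ∏_{i≠k} F_i(2T) (1 - F_k(2T))`. For large `T` this bound is positive,
as `F_i(2T) → 1` and `F_k(2T) < 1`; since `P^{(n)} → 0`, eventually every multiplier
exceeds `T`.
-/

open MeasureTheory Filter Set Topology

noncomputable def Fcdf (f : ℝ → ℝ) (t : ℝ) : ℝ := ∫ γ in (0:ℝ)..t, f γ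

section Cdf

variable {f : ℝ → ℝ}

lemma Fcdf_eq_setIntegral_Ioc {t : ℝ} (ht : 0 ≤ t) : Fcdf f t = ∫ γ in Ioc 0 t, f γ :=
  intervalIntegral.integral_of_le ht

lemma Fcdf_nonneg (hnn : ∀ x, 0 ≤ f x) {t : ℝ} (ht : 0 ≤ t) : 0 ≤ Fcdf f t :=
  intervalIntegral.integral_nonneg ht fun x _ => hnn x

lemma Fcdf_monotoneOn (hnn : ∀ x, 0 ≤ f x) (hint : IntegrableOn f (Ioi 0)) :
    MonotoneOn (Fcdf f) (Ici 0) := by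
  intro s hs t ht hst
  rw [Fcdf_eq_setIntegral_Ioc hs, Fcdf_eq_setIntegral_Ioc ht]
  exact setIntegral_mono_set (hint.mono_set Ioc_subset_Ioi_self) (ae_of_all _ fun x => hnn x)
    (Ioc_subset_Ioc_right hst).eventuallyLE

lemma Fcdf_le_one (hnn : ∀ x, 0 ≤ f x) (hint : IntegrableOn f (Ioi 0))
    (hone : ∫ γ in Ioi 0, f γ = 1) {t : ℝ} (ht : 0 ≤ t) : Fcdf f t ≤ 1 := by
  rw [Fcdf_eq_setIntegral_Ioc ht, ← hone]
  exact setIntegral_mono_set hint (ae_of_all _ fun x => hnn x) Ioc_subset_Ioi_self.eventuallyLE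

lemma tendsto_Fcdf_atTop (hint : IntegrableOn f (Ioi 0)) (hone : ∫ γ in Ioi 0, f γ = 1) :
    Tendsto (Fcdf f) atTop (𝓝 1) :=
  hone ▸ intervalIntegral_tendsto_integral_Ioi 0 hint tendsto_id

lemma setIntegral_Ioi_eq_one_sub_Fcdf (hint : IntegrableOn f (Ioi 0))
    (hone : ∫ γ in Ioi 0, f γ = 1) {t : ℝ} (ht : 0 ≤ t) :
    ∫ γ in Ioi t, f γ = 1 - Fcdf f t := by
  have hunion : Ioc 0 t ∪ Ioi t = Ioi 0 := Ioc_union_Ioi_eq_Ioi ht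
  have hsplit := setIntegral_union (Ioc_disjoint_Ioi le_rfl) measurableSet_Ioi
    (hint.mono_set (hunion ▸ subset_union_left)) (hint.mono_set (hunion ▸ subset_union_right))
  rw [hunion, hone, ← Fcdf_eq_setIntegral_Ioc ht] at hsplit
  linarith

end Cdf

section PowerConstraint

variable {K : ℕ} {f : Fin K → ℝ → ℝ}

/-- The integrand of the power constraint (E305) of user `k` with multipliers `l`. -/
noncomputable def macIntegrand (f : Fin K → ℝ → ℝ) (l : Fin K → ℝ) (k : Fin K) (h : ℝ) : ℝ :=
  (1 / l k - 1 / h) * (∏ i ∈ Finset.univ.erase k, Fcdf (f i) (l i / l k * h)) * f k h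

noncomputable def macPower (f : Fin K → ℝ → ℝ) (l : Fin K → ℝ) (k : Fin K) : ℝ :=
  ∫ h in Ioi (l k), macIntegrand f l k h

noncomputable def macPowerLowerBound (f : Fin K → ℝ → ℝ) (k : Fin K) (T : ℝ) : ℝ :=
  1 / (2 * T) * (∏ i ∈ Finset.univ.erase k, Fcdf (f i) (2 * T)) * (1 - Fcdf (f k) (2 * T))

lemma macIntegrand_nonneg_and_le (hnn : ∀ i x, 0 ≤ f i x)
    (hint : ∀ i, IntegrableOn (f i) (Ioi 0)) (hone : ∀ i, ∫ γ in Ioi 0, f i γ = 1)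
    {l : Fin K → ℝ} (hpos : ∀ i, 0 < l i) {k : Fin K} {h : ℝ} (hh : l k < h) :
    0 ≤ macIntegrand f l k h ∧ macIntegrand f l k h ≤ 1 / l k * f k h := by
  have hh0 : 0 < h := (hpos k).trans hh
  have hF : ∀ i, 0 ≤ Fcdf (f i) (l i / l k * h) ∧ Fcdf (f i) (l i / l k * h) ≤ 1 := fun i =>
    have harg : 0 ≤ l i / l k * h := by have := hpos k; have := hpos i; positivity
    ⟨Fcdf_nonneg (hnn i) harg, Fcdf_le_one (hnn i) (hint i) (hone i) harg⟩
  have hprod0 := Finset.prod_nonneg fun i (_ : i ∈ Finset.univ.erase k) => (hF i).1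
  have hprod1 := Finset.prod_le_one (fun i (_ : i ∈ Finset.univ.erase k) => (hF i).1)
    fun i _ => (hF i).2
  have hinv : 1 / h < 1 / l k := one_div_lt_one_div_of_lt (hpos k) hh
  have hinv0 : 0 < 1 / h := one_div_pos.2 hh0
  have hfk := hnn k h
  unfold macIntegrand
  constructor
  · have : 0 ≤ 1 / l k - 1 / h := by linarith
    positivity
  · calc _ ≤ 1 / l k * 1 * f k h := by gcongr <;> linarith
      _ = 1 / l k * f k h := by ring

lemma integrableOn_macIntegrand (hnn : ∀ i x, 0 ≤ f i x)
    (hint : ∀ i, IntegrableOn (f i) (Ioi 0)) (hone : ∀ i, ∫ γ in Ioi 0, f i γ = 1)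
    {l : Fin K → ℝ} (hpos : ∀ i, 0 < l i) (k : Fin K) :
    IntegrableOn (macIntegrand f l k) (Ioi (l k)) := by
  have hsub : Ioi (l k) ⊆ Ioi 0 := Ioi_subset_Ioi (hpos k).le
  have hFmono : ∀ i, MonotoneOn (fun h => Fcdf (f i) (l i / l k * h)) (Ioi (l k)) :=
    fun i a ha b hb hab =>
      have hc : 0 ≤ l i / l k := (div_pos (hpos i) (hpos k)).le
      Fcdf_monotoneOn (hnn i) (hint i) (mul_nonneg hc (hsub ha).le) (mul_nonneg hc (hsub hb).le)
        (mul_le_mul_of_nonneg_left hab hc)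
  have hprod : AEMeasurable (fun h => ∏ i ∈ Finset.univ.erase k, Fcdf (f i) (l i / l k * h))
      (volume.restrict (Ioi (l k))) := Finset.aemeasurable_fun_prod _ fun i _ =>
    aemeasurable_restrict_of_monotoneOn measurableSet_Ioi (hFmono i)
  have hmeas : AEStronglyMeasurable (macIntegrand f l k) (volume.restrict (Ioi (l k))) :=
    ((measurable_const.sub (measurable_const.div measurable_id)).aemeasurable.mul
      hprod).aestronglyMeasurable.mul ((hint k).mono_set hsub).aestronglyMeasurable
  refine Integrable.mono' (((hint k).mono_set hsub).const_mul (1 / l k)) hmeas ?_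
  filter_upwards [ae_restrict_mem measurableSet_Ioi] with h hh
  obtain ⟨h0, h1⟩ := macIntegrand_nonneg_and_le hnn hint hone hpos hh
  rwa [Real.norm_eq_abs, abs_of_nonneg h0]

lemma macPowerLowerBound_le_macPower (hnn : ∀ i x, 0 ≤ f i x)
    (hint : ∀ i, IntegrableOn (f i) (Ioi 0)) (hone : ∀ i, ∫ γ in Ioi 0, f i γ = 1)
    {l : Fin K → ℝ} (hpos : ∀ i, 0 < l i) {k : Fin K} (hmin : ∀ i, l k ≤ l i)
    {T : ℝ} (hkT : l k ≤ T) :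
    macPowerLowerBound f k T ≤ macPower f l k := by
  have hT : 0 < T := (hpos k).trans_le hkT
  have hsub : Ioi (2 * T) ⊆ Ioi (l k) := Ioi_subset_Ioi (by linarith)
  have hint_l := integrableOn_macIntegrand hnn hint hone hpos k
  calc macPowerLowerBound f k T
      = ∫ h in Ioi (2 * T),
          1 / (2 * T) * (∏ i ∈ Finset.univ.erase k, Fcdf (f i) (2 * T)) * f k h := by
        rw [integral_const_mul, setIntegral_Ioi_eq_one_sub_Fcdf (hint k) (hone k) (by positivity)]
        rfl
    _ ≤ ∫ h in Ioi (2 * T), macIntegrand f l k h := by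
        refine setIntegral_mono_on
          (((hint k).mono_set (Ioi_subset_Ioi (by positivity))).const_mul _)
          (hint_l.mono_set hsub) measurableSet_Ioi fun h (hh : 2 * T < h) => ?_
        have hinv : 1 / h ≤ 1 / (2 * T) := one_div_le_one_div_of_le (by positivity) hh.le
        have hinvk : 1 / T ≤ 1 / l k := one_div_le_one_div_of_le (hpos k) hkT
        have hfactor : 1 / (2 * T) ≤ 1 / l k - 1 / h := by
          have : 1 / T = 2 * (1 / (2 * T)) := by field_simp
          linarith
        have hprod : ∏ i ∈ Finset.univ.erase k, Fcdf (f i) (2 * T) ≤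
            ∏ i ∈ Finset.univ.erase k, Fcdf (f i) (l i / l k * h) := by
          refine Finset.prod_le_prod (fun i _ => Fcdf_nonneg (hnn i) (by positivity)) fun i _ => ?_
          have hratio : 1 ≤ l i / l k := (one_le_div (hpos k)).2 (hmin i)
          have hh0 : 0 < h := by linarith
          exact Fcdf_monotoneOn (hnn i) (hint i) (by simp only [mem_Ici]; positivity)
            (by simp only [mem_Ici]; positivity) (by nlinarith)
        have hprod0 : 0 ≤ ∏ i ∈ Finset.univ.erase k, Fcdf (f i) (2 * T) :=
          Finset.prod_nonneg fun i _ => Fcdf_nonneg (hnn i) (by positivity)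
        have hfactor0 : 0 ≤ 1 / l k - 1 / h := (one_div_pos.2 (by positivity)).le.trans hfactor
        exact mul_le_mul_of_nonneg_right (mul_le_mul hfactor hprod hprod0 hfactor0) (hnn k h)
    _ ≤ macPower f l k :=
        setIntegral_mono_set hint_l
          ((ae_restrict_mem measurableSet_Ioi).mono fun h hh =>
            (macIntegrand_nonneg_and_le hnn hint hone hpos hh).1)
          hsub.eventuallyLE

lemma eventually_macPowerLowerBound_pos (hint : ∀ i, IntegrableOn (f i) (Ioi 0))
    (hone : ∀ i, ∫ γ in Ioi 0, f i γ = 1) (hsupp : ∀ i, ∀ t > (0:ℝ), Fcdf (f i) t < 1) :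
    ∀ᶠ T in atTop, ∀ k, 0 < macPowerLowerBound f k T := by
  have hFpos : ∀ᶠ T in atTop, ∀ i, 0 < Fcdf (f i) (2 * T) := eventually_all.2 fun i =>
    ((tendsto_Fcdf_atTop (hint i) (hone i)).comp (tendsto_id.const_mul_atTop two_pos)).eventually
      (eventually_gt_nhds one_pos)
  filter_upwards [eventually_gt_atTop 0, hFpos] with T hT hF k
  have hprod := Finset.prod_pos fun i (_ : i ∈ Finset.univ.erase k) => hF i
  have htail : 0 < 1 - Fcdf (f k) (2 * T) := sub_pos.2 (hsupp k _ (by positivity))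
  unfold macPowerLowerBound
  positivity

lemma lt_of_forall_macPower_lt_lowerBound (hnn : ∀ i x, 0 ≤ f i x)
    (hint : ∀ i, IntegrableOn (f i) (Ioi 0)) (hone : ∀ i, ∫ γ in Ioi 0, f i γ = 1)
    {l : Fin K → ℝ} (hpos : ∀ i, 0 < l i) {T : ℝ}
    (hlt : ∀ j, macPower f l j < macPowerLowerBound f j T)
    (k : Fin K) : T < l k := by
  obtain ⟨j, -, hj⟩ := Finset.univ.exists_min_image l ⟨k, Finset.mem_univ k⟩
  by_contra! hkT
  exact (hlt j).not_ge (macPowerLowerBound_le_macPower hnn hint hone hpos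
    (fun i => hj i (Finset.mem_univ i)) ((hj k (Finset.mem_univ k)).trans hkT))

end PowerConstraint

theorem mac_multipliers_tendsto_atTop_general (K : ℕ)
    (f : Fin K → ℝ → ℝ)
    (hnn : ∀ i x, 0 ≤ f i x)
    (hint : ∀ i, IntegrableOn (f i) (Set.Ioi (0:ℝ)))
    (hone : ∀ i, ∫ γ in Set.Ioi (0:ℝ), f i γ = 1)
    (hsupp : ∀ i, ∀ t > (0:ℝ), Fcdf (f i) t < 1)
    (P : ℕ → Fin K → ℝ)
    (hPtend : ∀ k, Tendsto (fun n => P n k) atTop (nhds 0))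
    (lam : ℕ → Fin K → ℝ) (hlampos : ∀ n k, 0 < lam n k)
    (hconstraint : ∀ n (k : Fin K),
      (∫ h in Set.Ioi (lam n k),
          (1 / lam n k - 1 / h) *
            (∏ i ∈ Finset.univ.erase k, Fcdf (f i) (lam n i / lam n k * h)) *
              f k h) = P n k) :
    ∀ k : Fin K, Tendsto (fun n => lam n k) atTop atTop := by
  intro k
  refine tendsto_atTop.2 fun b => ?_
  obtain ⟨T, hbT, hbound⟩ :=
    ((eventually_ge_atTop b).and (eventually_macPowerLowerBound_pos hint hone hsupp)).exists
  have hsmall : ∀ᶠ n in atTop, ∀ j, P n j < macPowerLowerBound f j T :=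
    eventually_all.2 fun j => (hPtend j).eventually (eventually_lt_nhds (hbound j))
  filter_upwards [hsmall] with n hn
  exact hbT.trans (lt_of_forall_macPower_lt_lowerBound hnn hint hone (hlampos n)
    (fun j => (hconstraint n j).trans_lt (hn j)) k).le

/-- Lemma 1: if the average powers `P_k^{(n)}` all tend to `0` and the Lagrange
multipliers `λ^{(n)}` satisfy the power constraints (E305), then every
`λ_k^{(n)} → ∞`. -/
theorem mac_multipliers_tendsto_atTop (K : ℕ) (hK : 1 ≤ K)
    (f : Fin K → ℝ → ℝ)
    (hmeas : ∀ i, Measurable (f i))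
    (hnn : ∀ i x, 0 ≤ f i x)
    (hzero : ∀ i, ∀ x ≤ (0:ℝ), f i x = 0)
    (hint : ∀ i, IntegrableOn (f i) (Set.Ioi (0:ℝ)))
    (hone : ∀ i, ∫ γ in Set.Ioi (0:ℝ), f i γ = 1)
    (hsupp : ∀ i, ∀ t > (0:ℝ), Fcdf (f i) t < 1)
    (P : ℕ → Fin K → ℝ) (hPpos : ∀ n k, 0 < P n k)
    (hPtend : ∀ k, Tendsto (fun n => P n k) atTop (nhds 0))
    (lam : ℕ → Fin K → ℝ) (hlampos : ∀ n k, 0 < lam n k)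
    (hconstraint : ∀ n (k : Fin K),
      (∫ h in Set.Ioi (lam n k),
          (1 / lam n k - 1 / h) *
            (∏ i ∈ Finset.univ.erase k, Fcdf (f i) (lam n i / lam n k * h)) *
              f k h) = P n k) :
    ∀ k : Fin K, Tendsto (fun n => lam n k) atTop atTop :=
  mac_multipliers_tendsto_atTop_general K f hnn hint hone hsupp P hPtend lam hlampos hconstraint
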